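/- For finite partial evaluation trees t and t': if t ⟶ t' (one step of the transition relation on partial evaluation trees) then t ⊏ t' (strict refinement); and conversely, if t ⊑ t' then t ⟶* t' (t' is reachable from t in finitely many transition steps). -/

import Mathlib

/-- Judgements over configurations `C` and extended results `Option R`
    (`none` stands for the special extra result such as `?`, `wrong`, or `∞`). -/
abbrev Judg (C R : Type) := C × Option R

/-- Lift a complete judgement to an extended judgement. -/
def liftJ {C R : Type} (j : C × R) : Judg C R := (j.1, some j.2)

/-- Bounded-premises condition. -/
def BP {C R : Type} (Rules : Set (List (C × R) × (C × R))) : Prop :=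
  ∀ c : C, ∃ b : ℕ, ∀ js res, (js, (c, res)) ∈ Rules → js.length ≤ b

/-- The extended rule set `Rules_?`: original rules (lifted), start axioms
    `c ⇒ ?`, and partial rules. -/
def RulesQ {C R : Type} (Rules : Set (List (C × R) × (C × R))) :
    Set (List (Judg C R) × Judg C R) :=
  { r | (∃ c : C, r = ([], (c, none)))
      ∨ (∃ (js : List (C × R)) (c : C) (res : R), (js, (c, res)) ∈ Rules ∧ r = (js.map liftJ, (c, some res)))
      ∨ (∃ (js : List (C × R)) (c : C) (res : R) (i : ℕ) (hi : i < js.length) (u : Option R),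
          (js, (c, res)) ∈ Rules ∧
          r = ((js.take i).map liftJ ++ [((js[i]'hi).1, u)], (c, none))) }

/-- Ordered trees labelled in `L`: partial functions from positions (lists of
    child indices) to labels, with nonempty, prefix-closed,
    sibling-downward-closed domain. -/
structure OTree (L : Type) where
  label : List ℕ → Option L
  root_isSome : (label []).isSome
  pref : ∀ α n, (label (α ++ [n])).isSome → (label α).isSome
  sib : ∀ α n k, (label (α ++ [n])).isSome → k ≤ n → (label (α ++ [k])).isSome

/-- A tree is an evaluation tree in a rule set: at every node, the ordered
    children labels together with the node label form a rule. -/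
def IsTreeIn {L : Type} (Rules : Set (List L × L)) (t : OTree L) : Prop :=
  ∀ α l, t.label α = some l →
    ∃ ps : List L, (∀ i : ℕ, t.label (α ++ [i]) = ps[i]?) ∧ (ps, l) ∈ Rules

/-- Partial evaluation trees: evaluation trees in `Rules_?`. -/
def IsPET {C R : Type} (Rules : Set (List (C × R) × (C × R)))
    (t : OTree (Judg C R)) : Prop :=
  IsTreeIn (RulesQ Rules) t

/-- The refinement relation `⊑` on trees labelled by possibly-incomplete
    judgements. -/
def TreeLE {C R : Type} (t t' : OTree (Judg C R)) : Prop :=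
  (∀ α, (t.label α).isSome → (t'.label α).isSome) ∧
  ∀ α c u, t.label α = some (c, u) →
    (∃ (u' : Option R), t'.label α = some (c, u')) ∧
    (u.isSome → ∀ β, t.label (α ++ β) = t'.label (α ++ β))

/-- Strict refinement `⊏`. -/
def TreeLT {C R : Type} (t t' : OTree (Judg C R)) : Prop :=
  TreeLE t t' ∧ t ≠ t'

/-- A tree is finite if its domain is finite. -/
def TreeFinite {L : Type} (t : OTree L) : Prop :=
  Set.Finite {α | (t.label α).isSome}

/-- Well-formedness: every subtree rooted at a complete node is finite. -/
def WellFormed {C R : Type} (t : OTree (Judg C R)) : Prop :=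
  ∀ α c r, t.label α = some (c, some r) →
    Set.Finite {β | (t.label (α ++ β)).isSome}

/-- `t` is a least upper bound of the sequence `f` w.r.t. `⊑`. -/
def IsLubSeq {C R : Type} (f : ℕ → OTree (Judg C R)) (t : OTree (Judg C R)) : Prop :=
  (∀ n, TreeLE (f n) t) ∧ ∀ t', (∀ n, TreeLE (f n) t') → TreeLE t t'

/-- Inductive derivability in a rule set with finite-list premises. -/
inductive IndDerives {J : Type} (Rules : Set (List J × J)) : J → Prop where
  | node (ps : List J) (j : J) : (ps, j) ∈ Rules →
      (∀ p ∈ ps, IndDerives Rules p) → IndDerives Rules j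

/-- A set of judgements is consistent w.r.t. a rule set. -/
def ConsistentL {J : Type} (Rules : Set (List J × J)) (X : Set J) : Prop :=
  ∀ j ∈ X, ∃ (ps : List J), (ps, j) ∈ Rules ∧ ∀ p ∈ ps, p ∈ X

/-- Coinductive derivability: membership in some consistent set. -/
def CoDerives {J : Type} (Rules : Set (List J × J)) (j : J) : Prop :=
  ∃ (X : Set J), ConsistentL Rules X ∧ j ∈ X

/-- Derivability in a generalised inference system (rules + corules):
    membership in a consistent set all of whose elements have a finite
    derivation using both rules and corules. -/
def GenDerives {J : Type} (rules corules : Set (List J × J)) (j : J) : Prop :=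
  ∃ (X : Set J), ConsistentL rules X ∧ (∀ x ∈ X, IndDerives (rules ∪ corules) x) ∧ j ∈ X
/-- The single-node tree. -/
def leafT {L : Type} (l : L) : OTree L where
  label α := if α = [] then some l else none
  root_isSome := by simp
  pref := by
    intro α n h
    simp at h
  sib := by
    intro α n k h _
    simp at h

/-- The tree with root label `l` and ordered list of immediate subtrees `ts`. -/
def nodeT {L : Type} (l : L) (ts : List (OTree L)) : OTree L where
  label α :=
    match α with
    | [] => some l
    | i :: β => (ts[i]?).bind fun t => t.label β
  root_isSome := by simp
  pref := by
    intro α n h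
    match α with
    | [] => rfl
    | i :: β =>
      replace h : (ts[i]?.bind fun t => t.label (β ++ [n])).isSome = true := h
      show (ts[i]?.bind fun t => t.label β).isSome = true
      rcases hts : ts[i]? with _ | t
      · rw [hts] at h; simp at h
      · rw [hts] at h
        simpa using t.pref β n (by simpa using h)
  sib := by
    intro α n k h hk
    match α with
    | [] =>
      replace h : (ts[n]?.bind fun t => t.label []).isSome = true := h
      show (ts[k]?.bind fun t => t.label []).isSome = true
      rcases hts : ts[n]? with _ | t
      · rw [hts] at h; simp at h
      · have hn : n < ts.length := by
          by_contra hc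
          rw [List.getElem?_eq_none (by omega)] at hts
          cases hts
        have hk' : k < ts.length := lt_of_le_of_lt hk hn
        rw [List.getElem?_eq_getElem hk']
        simpa using (ts[k]'hk').root_isSome
    | i :: β =>
      replace h : (ts[i]?.bind fun t => t.label (β ++ [n])).isSome = true := h
      show (ts[i]?.bind fun t => t.label (β ++ [k])).isSome = true
      rcases hts : ts[i]? with _ | t
      · rw [hts] at h; simp at h
      · rw [hts] at h
        simpa using t.sib β n k (by simpa using h) hk

/-- The transition relation on (finite) partial evaluation trees. -/
inductive Step {C R : Type} (Rules : Set (List (C × R) × (C × R))) :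
    OTree (Judg C R) → OTree (Judg C R) → Prop where
  | tr1 (c : C) (r : R) (h : ([], (c, r)) ∈ Rules) :
      Step Rules (leafT (c, none)) (leafT (c, some r))
  | tr2 (js : List (C × R)) (c : C) (res : R) (hne : js ≠ [])
      (h : (js, (c, res)) ∈ Rules) :
      Step Rules (leafT (c, none))
        (nodeT (c, none) [leafT ((js.head hne).1, none)])
  | tr3 (js : List (C × R)) (c : C) (res : R) (trs : List (OTree (Judg C R)))
      (h : (js, (c, res)) ∈ Rules) (hlen : trs.length = js.length)
      (hroots : ∀ (k : ℕ) (hk : k < js.length),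
        ∃ (t : OTree (Judg C R)), trs[k]? = some t ∧
          t.label [] = some (liftJ (js[k]'hk))) :
      Step Rules (nodeT (c, none) trs) (nodeT (c, some res) trs)
  | tr4 (js : List (C × R)) (c : C) (res : R) (trs : List (OTree (Judg C R)))
      (h : (js, (c, res)) ∈ Rules) (hne : trs ≠ [])
      (hlt : trs.length < js.length)
      (hroots : ∀ (k : ℕ) (hk : k < trs.length),
        ∃ (t : OTree (Judg C R)), trs[k]? = some t ∧
          t.label [] = some (liftJ (js[k]'(Nat.lt_trans hk hlt)))) :
      Step Rules (nodeT (c, none) trs)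
        (nodeT (c, none) (trs ++ [leafT ((js[trs.length]'hlt).1, none)]))
  | tr5 (js : List (C × R)) (c : C) (res : R) (trs : List (OTree (Judg C R)))
      (t t' : OTree (Judg C R))
      (h : (js, (c, res)) ∈ Rules)
      (hlt : trs.length < js.length)
      (hroots : ∀ (k : ℕ) (hk : k < trs.length),
        ∃ (s : OTree (Judg C R)), trs[k]? = some s ∧
          s.label [] = some (liftJ (js[k]'(Nat.lt_trans hk hlt))))
      (hconf : t.label [] = some ((js[trs.length]'hlt).1, none))
      (hstep : Step Rules t t') :
      Step Rules (nodeT (c, none) (trs ++ [t])) (nodeT (c, none) (trs ++ [t']))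

/-!
A step either adds a fresh leaf or fills in the result of an incomplete node, so it strictly
refines. Conversely, a partial evaluation tree is `nodeT l ts` where the roots of `ts` form a rule
of `RulesQ`: a start axiom, a complete rule, or a partial rule in which only the last premise may
be incomplete. If `t ⊑ t'` and `t ≠ t'`, follow the last, incomplete child of `t` down as long as
`t'` has a different subtree there. Where this stops, the children of `t` are complete, hence
shared with `t'`, and the rule used by `t'` at that node either closes it or opens its next
premise: this is a step `t ⟶ t''` with `t'' ⊑ t'`. A strict refinement increases the number of
nodes plus the number of complete nodes, which is bounded by its value at the finite tree `t'`,
so finitely many such steps reach `t'`.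
-/

theorem List.exists_append_forall₂_iff {α β : Type*} {R : α → β → Prop} {l : List α}
    {l' : List β} :
    (∃ A B, l' = A ++ B ∧ Forall₂ R l A) ↔
      ∀ (k : ℕ) x, l[k]? = some x → ∃ y, l'[k]? = some y ∧ R x y := by
  induction l generalizing l' with
  | nil => simp
  | cons a l ih =>
    constructor
    · rintro ⟨_, B, rfl, hA⟩
      obtain ⟨b, A, hab, hA', rfl⟩ := forall₂_cons_left_iff.1 hA
      rintro (_ | k) x hx
      · exact ⟨b, rfl, by simpa [← (Option.some_inj.1 hx)] using hab⟩
      · exact ih.1 ⟨A, B, rfl, hA'⟩ k x hx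
    · intro h
      obtain ⟨b, hb, hab⟩ := h 0 a rfl
      obtain _ | ⟨b', l'⟩ := l'
      · simp at hb
      obtain rfl : b' = b := by simpa using hb
      obtain ⟨A, B, rfl, hA⟩ := ih.2 fun k x hx => h (k + 1) x hx
      exact ⟨b' :: A, B, rfl, .cons hab hA⟩

theorem List.forall₂_append_left_iff {α β : Type*} {R : α → β → Prop} {l₁ l₂ : List α}
    {l : List β} :
    Forall₂ R (l₁ ++ l₂) l ↔
      ∃ A B, l = A ++ B ∧ Forall₂ R l₁ A ∧ Forall₂ R l₂ B := by
  induction l₁ generalizing l with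
  | nil => simp
  | cons a l₁ ih =>
    simp only [cons_append, forall₂_cons_left_iff, ih]
    constructor
    · rintro ⟨b, _, hab, ⟨A, B, rfl, hA, hB⟩, rfl⟩
      exact ⟨b :: A, B, rfl, ⟨b, A, hab, hA, rfl⟩, hB⟩
    · rintro ⟨_, B, rfl, ⟨b, A, hab, hA, rfl⟩, hB⟩
      exact ⟨b, A ++ B, hab, ⟨A, B, rfl, hA, hB⟩, rfl⟩

namespace OTree
variable {L : Type}

@[ext] theorem ext {t t' : OTree L} (h : t.label = t'.label) : t = t' := by
  cases t; cases t'; cases h; rfl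

def root (t : OTree L) : L := (t.label []).get t.root_isSome

def dom (t : OTree L) : Set (List ℕ) := {α | (t.label α).isSome}

theorem label_nil (t : OTree L) : t.label [] = some t.root := by simp [root]

theorem isSome_label_of_isSome_append (t : OTree L) (α β : List ℕ)
    (h : (t.label (α ++ β)).isSome) : (t.label α).isSome := by
  induction β using List.reverseRecOn with
  | nil => simpa using h
  | append_singleton β n ih => exact ih (t.pref _ n (by simpa using h))

def child (t : OTree L) (i : ℕ) (h : (t.label [i]).isSome) : OTree L where
  label β := t.label (i :: β)
  root_isSome := h
  pref α := t.pref (i :: α)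
  sib α := t.sib (i :: α)

end OTree

section NodeT
variable {L : Type}

@[simp] theorem nodeT_label_nil (l : L) (ts : List (OTree L)) :
    (nodeT l ts).label [] = some l := rfl

@[simp] theorem nodeT_label_cons (l : L) (ts : List (OTree L)) (i : ℕ) (β : List ℕ) :
    (nodeT l ts).label (i :: β) = ts[i]?.bind fun t => t.label β := rfl

@[simp] theorem root_leafT (l : L) : (leafT l).root = l := rfl

theorem leafT_eq_nodeT_nil (l : L) : leafT l = nodeT l [] := by
  ext (_ | _) <;> simp [leafT]

theorem nodeT_inj {l l' : L} {ts ts' : List (OTree L)} :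
    nodeT l ts = nodeT l' ts' ↔ l = l' ∧ ts = ts' := by
  refine ⟨fun h => ⟨by simpa using congrArg (·.label []) h, List.ext_getElem? fun k => ?_⟩,
    fun ⟨hl, hts⟩ => hl ▸ hts ▸ rfl⟩
  have hk (β) : (ts[k]?.bind fun t => t.label β) = ts'[k]?.bind fun t => t.label β := by
    simpa using congrArg (·.label (k :: β)) h
  cases hs : ts[k]? <;> cases hs' : ts'[k]?
  case some.some s s' =>
    exact congrArg some (OTree.ext (funext fun β => by simpa [hs, hs'] using hk β))
  case none.none => rfl
  all_goals simpa [hs, hs', OTree.label_nil] using hk []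

theorem exists_eq_nodeT_of_label_singleton {t : OTree L} {ps : List L}
    (hps : ∀ i, t.label [i] = ps[i]?) : ∃ ts, t = nodeT t.root ts := by
  refine ⟨List.ofFn fun k : Fin ps.length => t.child k (by simp [hps]), ?_⟩
  ext1; funext α
  obtain _ | ⟨k, β⟩ := α
  · exact t.label_nil
  by_cases hk : k < ps.length
  · simp [hk, OTree.child]
  · have : t.label (k :: β) = none := by
      by_contra h
      have := t.isSome_label_of_isSome_append [k] β (Option.ne_none_iff_isSome.1 h)
      simp [hps, hk] at this
    simp [hk, this]

end NodeT

section IsTreeIn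
variable {L : Type} {Rules' : Set (List L × L)}

theorem isTreeIn_nodeT_iff {l : L} {ts : List (OTree L)} :
    IsTreeIn Rules' (nodeT l ts) ↔
      (ts.map OTree.root, l) ∈ Rules' ∧ ∀ s ∈ ts, IsTreeIn Rules' s := by
  have hroots (i : ℕ) : (nodeT l ts).label [i] = (ts.map OTree.root)[i]? := by
    cases h : ts[i]? <;> simp [h, OTree.label_nil]
  constructor
  · intro h
    obtain ⟨ps, hps, hrule⟩ := h [] l rfl
    obtain rfl : ps = ts.map OTree.root := List.ext_getElem? fun i => (hps i).symm.trans (hroots i)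
    refine ⟨hrule, fun s hs β l' hl' => ?_⟩
    obtain ⟨k, hk, rfl⟩ := List.getElem_of_mem hs
    simpa [hk] using h (k :: β) l' (by simpa [hk] using hl')
  · rintro ⟨hrule, hsub⟩ (_ | ⟨k, β⟩) l' hl'
    · obtain rfl : l = l' := by simpa using hl'
      exact ⟨_, hroots, hrule⟩
    · obtain ⟨s, hs, hl'⟩ : ∃ s, ts[k]? = some s ∧ s.label β = some l' := by
        simpa [Option.bind_eq_some_iff] using hl'
      simpa [hs] using hsub s (List.mem_of_getElem? hs) β l' hl'

theorem IsTreeIn.exists_eq_nodeT {t : OTree L} (h : IsTreeIn Rules' t) :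
    ∃ l ts, t = nodeT l ts := by
  obtain ⟨ps, hps, -⟩ := h [] t.root t.label_nil
  exact ⟨t.root, exists_eq_nodeT_of_label_singleton hps⟩

end IsTreeIn

section Refinement
variable {C R : Type}

theorem TreeLE.refl (t : OTree (Judg C R)) : TreeLE t t :=
  ⟨fun _ h => h, fun _ _ u h => ⟨⟨u, h⟩, fun _ _ => rfl⟩⟩

theorem TreeLE.eq_of_root_complete {t t' : OTree (Judg C R)} (h : TreeLE t t')
    (hc : t.root.2.isSome) : t = t' :=
  OTree.ext (funext fun β => h.2 [] t.root.1 t.root.2 t.label_nil |>.2 hc β)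

theorem TreeLE.root_fst_eq {t t' : OTree (Judg C R)} (h : TreeLE t t') :
    t'.root.1 = t.root.1 := by
  obtain ⟨⟨u', h'⟩, -⟩ := h.2 [] t.root.1 t.root.2 t.label_nil
  simp [OTree.label_nil] at h'
  simp [h']

theorem treeLE_nodeT_iff {c : C} {l' : Judg C R} {ts ts' : List (OTree (Judg C R))} :
    TreeLE (nodeT (c, none) ts) (nodeT l' ts') ↔
      l'.1 = c ∧ ∃ A B, ts' = A ++ B ∧ List.Forall₂ TreeLE ts A := by
  rw [List.exists_append_forall₂_iff]
  constructor
  · rintro ⟨hdom, hlab⟩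
    refine ⟨by obtain ⟨⟨u', h⟩, -⟩ := hlab [] c none rfl; simp_all, fun k s hs => ?_⟩
    obtain ⟨s', hs'⟩ : ∃ s', ts'[k]? = some s' := by
      have := hdom [k] (by simp [hs, OTree.label_nil])
      exact Option.isSome_iff_exists.1 (by cases h : ts'[k]? <;> simp_all)
    refine ⟨s', hs', fun β hβ => ?_, fun β c₀ u hβ => ?_⟩
    · simpa [hs, hs'] using hdom (k :: β) (by simpa [hs] using hβ)
    · simpa [hs, hs'] using hlab (k :: β) c₀ u (by simpa [hs] using hβ)
  · rintro ⟨hl', hch⟩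
    constructor
    · rintro (_ | ⟨k, β⟩) hα
      · rfl
      obtain ⟨s, hs, hβ⟩ : ∃ s, ts[k]? = some s ∧ (s.label β).isSome := by
        simpa [Option.isSome_bind, Option.any_eq_true] using hα
      obtain ⟨s', hs', hss'⟩ := hch k s hs
      simpa [hs'] using hss'.1 β hβ
    · rintro (_ | ⟨k, β⟩) c₀ u hα
      · obtain ⟨rfl, rfl⟩ : c = c₀ ∧ none = u := by simpa using hα
        exact ⟨⟨l'.2, by simp [← hl']⟩, by simp⟩
      obtain ⟨s, hs, hβ⟩ : ∃ s, ts[k]? = some s ∧ s.label β = some (c₀, u) := by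
        simpa [Option.bind_eq_some_iff] using hα
      obtain ⟨s', hs', hss'⟩ := hch k s hs
      simpa [hs, hs'] using hss'.2 β c₀ u hβ

theorem leafT_treeLE {c : C} {s : OTree (Judg C R)} (h : s.root.1 = c) :
    TreeLE (leafT (c, none)) s := by
  refine ⟨fun α hα => ?_, fun α c₀ u hα => ?_⟩ <;>
    obtain rfl : α = [] := by by_contra hne; simp [leafT, hne] at hα
  · exact s.root_isSome
  · obtain ⟨rfl, rfl⟩ : c = c₀ ∧ none = u := by simpa [leafT] using hα
    exact ⟨⟨s.root.2, by rw [s.label_nil, ← h]⟩, by simp⟩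

end Refinement

section Finiteness
variable {L : Type} {l : L} {ts : List (OTree L)} {s : OTree L}

theorem image_cons_dom_subset_of_mem (hs : s ∈ ts) :
    ∃ k, (k :: ·) '' s.dom ⊆ (nodeT l ts).dom \ {[]} := by
  obtain ⟨k, hk, rfl⟩ := List.getElem_of_mem hs
  refine ⟨k, ?_⟩
  rintro _ ⟨β, hβ, rfl⟩
  simpa [OTree.dom, hk] using hβ

theorem TreeFinite.of_mem (h : TreeFinite (nodeT l ts)) (hs : s ∈ ts) : TreeFinite s := by
  obtain ⟨k, hk⟩ := image_cons_dom_subset_of_mem (l := l) hs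
  exact Set.Finite.of_finite_image (h.subset (hk.trans Set.sdiff_subset))
    (List.cons_injective.injOn)

theorem ncard_dom_lt_of_mem (h : TreeFinite (nodeT l ts)) (hs : s ∈ ts) :
    s.dom.ncard < (nodeT l ts).dom.ncard := by
  obtain ⟨k, hk⟩ := image_cons_dom_subset_of_mem (l := l) hs
  calc s.dom.ncard = ((k :: ·) '' s.dom).ncard :=
        (Set.ncard_image_of_injective _ List.cons_injective).symm
    _ ≤ ((nodeT l ts).dom \ {[]}).ncard := Set.ncard_le_ncard hk (h.subset Set.sdiff_subset)
    _ < (nodeT l ts).dom.ncard := Set.ncard_sdiff_singleton_lt_of_mem rfl h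

end Finiteness

section Weight
variable {C R : Type}

def completeNodes (t : OTree (Judg C R)) : Set (List ℕ) :=
  {α | ∃ c r, t.label α = some (c, some r)}

noncomputable def weight (t : OTree (Judg C R)) : ℕ := t.dom.ncard + (completeNodes t).ncard

theorem completeNodes_subset_dom (t : OTree (Judg C R)) : completeNodes t ⊆ t.dom := by
  rintro α ⟨c, r, h⟩
  simp [OTree.dom, h]

theorem TreeLE.completeNodes_subset {t t' : OTree (Judg C R)} (h : TreeLE t t') :
    completeNodes t ⊆ completeNodes t' := by
  rintro α ⟨c, r, hα⟩
  exact ⟨c, r, by simpa [hα] using ((h.2 α c (some r) hα).2 rfl []).symm⟩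

theorem TreeLE.eq_of_subset {t t' : OTree (Judg C R)} (h : TreeLE t t')
    (hdom : t'.dom ⊆ t.dom) (hcomplete : completeNodes t' ⊆ completeNodes t) : t = t' := by
  ext1; funext α
  rcases hα : t.label α with _ | ⟨c, _ | r⟩
  · by_contra hne
    simpa [OTree.dom, hα] using hdom (Option.ne_none_iff_isSome.1 (Ne.symm hne))
  · obtain ⟨_ | r', hα'⟩ := (h.2 α c none hα).1
    · exact hα'.symm
    · obtain ⟨_, _, h⟩ := hcomplete ⟨c, r', hα'⟩
      simp [hα] at h
  · simpa [hα] using (h.2 α c (some r) hα).2 rfl []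

theorem TreeLE.weight_le {t t' : OTree (Judg C R)} (h : TreeLE t t') (hfin : TreeFinite t') :
    weight t ≤ weight t' :=
  add_le_add (Set.ncard_le_ncard h.1 hfin)
    (Set.ncard_le_ncard h.completeNodes_subset (hfin.subset (completeNodes_subset_dom t')))

theorem TreeLT.weight_lt {t t' : OTree (Judg C R)} (h : TreeLT t t') (hfin : TreeFinite t') :
    weight t < weight t' := by
  have hfin' := hfin.subset (completeNodes_subset_dom t')
  by_cases hdom : t'.dom ⊆ t.dom
  · have hcomplete : ¬completeNodes t' ⊆ completeNodes t :=
      fun hc => h.2 (h.1.eq_of_subset hdom hc)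
    exact add_lt_add_of_le_of_lt (Set.ncard_le_ncard h.1.1 hfin)
      (Set.ncard_lt_ncard ⟨h.1.completeNodes_subset, hcomplete⟩ hfin')
  · exact add_lt_add_of_lt_of_le (Set.ncard_lt_ncard ⟨h.1.1, hdom⟩ hfin)
      (Set.ncard_le_ncard h.1.completeNodes_subset hfin')

end Weight

section RulesQ
variable {C R : Type} {Rules : Set (List (C × R) × (C × R))}

theorem liftJ_injective : Function.Injective (liftJ : C × R → Judg C R) := by
  rintro ⟨c, r⟩ ⟨c', r'⟩ h
  simpa [liftJ] using h

theorem mem_rulesQ_iff {ps : List (Judg C R)} {c : C} {u : Option R} :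
    (ps, (c, u)) ∈ RulesQ Rules ↔
      (ps = [] ∧ u = none) ∨
      (∃ js res, (js, (c, res)) ∈ Rules ∧ ps = js.map liftJ ∧ u = some res) ∨
      (∃ j₁ j j₂ res v, (j₁ ++ j :: j₂, (c, res)) ∈ Rules ∧
        ps = j₁.map liftJ ++ [(j.1, v)] ∧ u = none) := by
  simp only [RulesQ, Set.mem_ofPred_eq, Prod.mk.injEq]
  constructor
  · rintro (⟨_, rfl, rfl, rfl⟩ | ⟨js, _, res, hmem, rfl, rfl, rfl⟩ |
      ⟨js, _, res, i, hi, v, hmem, rfl, rfl, rfl⟩)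
    · exact Or.inl ⟨rfl, rfl⟩
    · exact Or.inr (Or.inl ⟨js, res, hmem, rfl, rfl⟩)
    · refine Or.inr (Or.inr ⟨js.take i, js[i], js.drop (i + 1), res, v, ?_, rfl, rfl⟩)
      rwa [← List.drop_eq_getElem_cons, List.take_append_drop]
  · rintro (⟨rfl, rfl⟩ | ⟨js, res, hmem, rfl, rfl⟩ |
      ⟨j₁, j, j₂, res, v, hmem, rfl, rfl⟩)
    · exact Or.inl ⟨c, rfl, rfl, rfl⟩
    · exact Or.inr (Or.inl ⟨js, c, res, hmem, rfl, rfl, rfl⟩)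
    · exact Or.inr (Or.inr ⟨_, c, res, j₁.length, by simp, v, hmem, by simp, rfl, rfl⟩)

theorem mem_rules_of_mem_rulesQ {P : List (C × R)} {c : C} {res : R}
    (h : (P.map liftJ, (c, some res)) ∈ RulesQ Rules) : (P, (c, res)) ∈ Rules := by
  obtain ⟨-, ⟨⟩⟩ | ⟨js, _, hmem, hjs, ⟨⟩⟩ | ⟨-, -, -, -, -, -, -, ⟨⟩⟩ :=
    mem_rulesQ_iff.1 h
  rwa [(List.map_injective_iff.2 liftJ_injective) hjs]

theorem eq_append_cons_of_map_liftJ_eq {js P : List (C × R)} {p : Judg C R} {Q : List (Judg C R)}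
    (h : js.map liftJ = P.map liftJ ++ p :: Q) :
    ∃ j j₂, js = P ++ j :: j₂ ∧ p = liftJ j := by
  obtain ⟨P', _, rfl, hP, hQ⟩ := List.map_eq_append_iff.1 h
  obtain ⟨j, j₂, rfl, rfl, -⟩ := List.map_eq_cons_iff.1 hQ
  obtain rfl := (List.map_injective_iff.2 liftJ_injective) hP
  exact ⟨j, j₂, rfl, rfl⟩

theorem exists_rule_of_mem_rulesQ {P : List (C × R)} {p : Judg C R} {Q : List (Judg C R)}
    {c : C} {u : Option R} (h : (P.map liftJ ++ p :: Q, (c, u)) ∈ RulesQ Rules) :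
    ∃ j j₂ res, (P ++ j :: j₂, (c, res)) ∈ Rules ∧ p.1 = j.1 := by
  obtain ⟨hnil, -⟩ | ⟨js, res, hmem, hjs, -⟩ | ⟨j₁, j, j₂, res, v, hmem, hps, -⟩ :=
    mem_rulesQ_iff.1 h
  · simp at hnil
  · obtain ⟨j, j₂, rfl, rfl⟩ := eq_append_cons_of_map_liftJ_eq hjs.symm
    exact ⟨j, j₂, res, hmem, rfl⟩
  · obtain rfl | ⟨Q, q, rfl⟩ := Q.eq_nil_or_concat'
    · obtain ⟨hP, hp⟩ := List.append_inj' hps rfl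
      obtain rfl := (List.map_injective_iff.2 liftJ_injective) hP
      exact ⟨j, j₂, res, hmem, by simp_all⟩
    · have hps' : (P.map liftJ ++ p :: Q) ++ [q] = j₁.map liftJ ++ [(j.1, v)] := by
        simpa using hps
      obtain ⟨j', j₂', rfl, rfl⟩ :=
        eq_append_cons_of_map_liftJ_eq (List.append_inj_left' hps' rfl).symm
      exact ⟨j', j₂' ++ j :: j₂, res, by simpa using hmem, rfl⟩

theorem eq_nil_of_mem_rulesQ {ps Q : List (Judg C R)} {p : Judg C R} {c : C} {u : Option R}
    (h : (ps ++ p :: Q, (c, u)) ∈ RulesQ Rules) (hp : p.2 = none) : Q = [] ∧ u = none := by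
  obtain ⟨hnil, -⟩ | ⟨js, -, -, hjs, -⟩ | ⟨j₁, j, -, -, v, -, hps, rfl⟩ := mem_rulesQ_iff.1 h
  · simp at hnil
  · have hp' : p ∈ js.map liftJ := hjs ▸ by simp
    obtain ⟨j, -, rfl⟩ := List.mem_map.1 hp'
    simp [liftJ] at hp
  · refine ⟨?_, rfl⟩
    obtain rfl | ⟨Q, q, rfl⟩ := Q.eq_nil_or_concat'
    · rfl
    · have hps' : (ps ++ p :: Q) ++ [q] = j₁.map liftJ ++ [(j.1, v)] := by simpa using hps
      have hp' : p ∈ j₁.map liftJ := List.append_inj_left' hps' rfl ▸ by simp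
      obtain ⟨j, -, rfl⟩ := List.mem_map.1 hp'
      simp [liftJ] at hp

end RulesQ

section Step
variable {C R : Type} {Rules : Set (List (C × R) × (C × R))}

theorem eq_of_forall₂_treeLE {trs A : List (OTree (Judg C R))} {P : List (C × R)}
    (htrs : trs.map OTree.root = P.map liftJ) (h : List.Forall₂ TreeLE trs A) : trs = A := by
  have hcomplete : ∀ s ∈ trs, s.root.2.isSome := by
    intro s hs
    have hroot : s.root ∈ P.map liftJ := htrs ▸ List.mem_map_of_mem hs
    obtain ⟨j, -, hj⟩ := List.mem_map.1 hroot
    simp [← hj, liftJ]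
  rw [← List.forall₂_eq_eq_eq]
  exact ((List.forall₂_and_left _ _).2 ⟨hcomplete, h⟩).imp fun _ _ h =>
    h.2.eq_of_root_complete h.1

theorem exists_getElem?_label_nil {trs : List (OTree (Judg C R))} {P Q : List (C × R)}
    (htrs : trs.map OTree.root = P.map liftJ) (k : ℕ) (hk : k < P.length)
    (hk' : k < (P ++ Q).length) :
    ∃ t, trs[k]? = some t ∧ t.label [] = some (liftJ (P ++ Q)[k]) := by
  have hlen : trs.length = P.length := by simpa using congrArg List.length htrs
  refine ⟨trs[k], by simp, ?_⟩
  rw [OTree.label_nil, List.getElem_append_left hk]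
  simpa [hk, hlen] using congrArg (·[k]?) htrs

theorem Step.close {trs : List (OTree (Judg C R))} {P : List (C × R)} {c : C} {res : R}
    (hrule : (P, (c, res)) ∈ Rules) (htrs : trs.map OTree.root = P.map liftJ) :
    Step Rules (nodeT (c, none) trs) (nodeT (c, some res) trs) := by
  have hlen : trs.length = P.length := by simpa using congrArg List.length htrs
  exact .tr3 P c res trs hrule hlen fun k hk =>
    by simpa using exists_getElem?_label_nil (Q := []) htrs k hk (by simpa using hk)

theorem Step.openNext {trs : List (OTree (Judg C R))} {P j₂ : List (C × R)} {j : C × R} {c : C}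
    {res : R} (hrule : (P ++ j :: j₂, (c, res)) ∈ Rules)
    (htrs : trs.map OTree.root = P.map liftJ) :
    Step Rules (nodeT (c, none) trs) (nodeT (c, none) (trs ++ [leafT (j.1, none)])) := by
  have hlen : trs.length = P.length := by simpa using congrArg List.length htrs
  rcases eq_or_ne trs [] with rfl | hne
  · obtain rfl : P = [] := by simpa using htrs.symm
    simpa [← leafT_eq_nodeT_nil] using Step.tr2 (j :: j₂) c res (by simp) hrule
  · convert Step.tr4 (P ++ j :: j₂) c res trs hrule hne (by simp [hlen])
      fun k hk => exists_getElem?_label_nil htrs k (hlen ▸ hk) _ using 5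
    simp [hlen]

theorem Step.descend {trs : List (OTree (Judg C R))} {P j₂ : List (C × R)} {j : C × R} {c : C}
    {res : R} {s s' : OTree (Judg C R)} (hrule : (P ++ j :: j₂, (c, res)) ∈ Rules)
    (htrs : trs.map OTree.root = P.map liftJ) (hs : s.root = (j.1, none))
    (hstep : Step Rules s s') :
    Step Rules (nodeT (c, none) (trs ++ [s])) (nodeT (c, none) (trs ++ [s'])) := by
  have hlen : trs.length = P.length := by simpa using congrArg List.length htrs
  exact .tr5 (P ++ j :: j₂) c res trs s s' hrule (by simp [hlen])
    (fun k hk => exists_getElem?_label_nil htrs k (hlen ▸ hk) _)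
    (by simp [OTree.label_nil, hs, hlen]) hstep

theorem forall₂_treeLE_refl (ts : List (OTree (Judg C R))) : List.Forall₂ TreeLE ts ts :=
  List.forall₂_same.2 fun s _ => TreeLE.refl s

theorem Step.treeLT {t t' : OTree (Judg C R)} (h : Step Rules t t') : TreeLT t t' := by
  induction h with
  | tr1 c r =>
    rw [leafT_eq_nodeT_nil, leafT_eq_nodeT_nil]
    exact ⟨treeLE_nodeT_iff.2 ⟨rfl, [], [], rfl, .nil⟩, by simp [nodeT_inj]⟩
  | tr2 js c =>
    rw [leafT_eq_nodeT_nil (c, none)]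
    exact ⟨treeLE_nodeT_iff.2 ⟨rfl, [], _, rfl, .nil⟩, by simp [nodeT_inj]⟩
  | tr3 js c res trs =>
    refine ⟨treeLE_nodeT_iff.2 ⟨rfl, trs, [], by simp, forall₂_treeLE_refl trs⟩, ?_⟩
    simp [nodeT_inj]
  | tr4 js c res trs =>
    refine ⟨treeLE_nodeT_iff.2 ⟨rfl, trs, _, rfl, forall₂_treeLE_refl trs⟩, ?_⟩
    simp [nodeT_inj]
  | tr5 js c res trs t t' _ _ _ _ _ ih =>
    refine ⟨treeLE_nodeT_iff.2 ⟨rfl, trs ++ [t'], [], by simp, ?_⟩, ?_⟩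
    · exact List.rel_append (forall₂_treeLE_refl trs) (.cons ih.1 .nil)
    · simpa [nodeT_inj] using ih.2

theorem isPET_leafT (c : C) : IsPET Rules (leafT (c, none)) := by
  rw [IsPET, leafT_eq_nodeT_nil, isTreeIn_nodeT_iff]
  exact ⟨mem_rulesQ_iff.2 (Or.inl ⟨rfl, rfl⟩), by simp⟩

theorem map_root_eq_of_getElem? {trs : List (OTree (Judg C R))} {js : List (C × R)}
    (hlen : trs.length ≤ js.length)
    (h : ∀ k (hk : k < trs.length), ∃ t, trs[k]? = some t ∧
      t.label [] = some (liftJ (js[k]'(lt_of_lt_of_le hk hlen)))) :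
    trs.map OTree.root = (js.take trs.length).map liftJ := by
  refine List.ext_getElem (by simp [hlen]) fun k hk _ => ?_
  obtain ⟨t, ht, hlabel⟩ := h k (by simpa using hk)
  simp_all [OTree.label_nil]

theorem IsPET.step {t t' : OTree (Judg C R)} (hpt : IsPET Rules t) (h : Step Rules t t') :
    IsPET Rules t' := by
  induction h with
  | tr1 c r hrule =>
    rw [IsPET, leafT_eq_nodeT_nil, isTreeIn_nodeT_iff]
    exact ⟨mem_rulesQ_iff.2 (Or.inr (Or.inl ⟨[], r, hrule, rfl, rfl⟩)), by simp⟩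
  | tr2 js c res hne hrule =>
    rw [IsPET, isTreeIn_nodeT_iff]
    refine ⟨mem_rulesQ_iff.2 (Or.inr (Or.inr ⟨[], js.head hne, js.tail, res, none, ?_, by simp,
      rfl⟩)), fun s hs => List.mem_singleton.1 hs ▸ isPET_leafT _⟩
    rwa [List.nil_append, List.cons_head_tail]
  | tr3 js c res trs hrule hlen hroots =>
    obtain ⟨-, hsub⟩ := isTreeIn_nodeT_iff.1 hpt
    have hroots' := map_root_eq_of_getElem? hlen.le fun k hk => hroots k (hlen ▸ hk)
    rw [hlen, List.take_length] at hroots'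
    exact isTreeIn_nodeT_iff.2
      ⟨mem_rulesQ_iff.2 (Or.inr (Or.inl ⟨js, res, hrule, hroots', rfl⟩)), hsub⟩
  | tr4 js c res trs hrule hne hlt hroots =>
    obtain ⟨-, hsub⟩ := isTreeIn_nodeT_iff.1 hpt
    refine isTreeIn_nodeT_iff.2 ⟨Or.inr (Or.inr ⟨js, c, res, _, hlt, none, hrule, ?_⟩), ?_⟩
    · simp [map_root_eq_of_getElem? hlt.le hroots]
    · simp only [List.mem_append, List.mem_singleton]
      rintro s (hs | rfl)
      exacts [hsub s hs, isPET_leafT _]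
  | tr5 js c res trs t t' hrule hlt hroots hconf hstep ih =>
    obtain ⟨-, hsub⟩ := isTreeIn_nodeT_iff.1 hpt
    have hroot : t'.root = ((js[trs.length]'hlt).1, t'.root.2) := by
      have ht : t.root = _ := Option.some_inj.1 (t.label_nil.symm.trans hconf)
      exact Prod.ext ((Step.treeLT hstep).1.root_fst_eq.trans (by rw [ht])) rfl
    refine isTreeIn_nodeT_iff.2
      ⟨Or.inr (Or.inr ⟨js, c, res, _, hlt, t'.root.2, hrule, ?_⟩), ?_⟩
    · simp [map_root_eq_of_getElem? hlt.le hroots, ← hroot]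
    · simp only [List.mem_append, List.mem_singleton] at hsub ⊢
      rintro s (hs | rfl)
      exacts [hsub s (Or.inl hs), ih (hsub t (Or.inr rfl))]

end Step

section Reachability
variable {C R : Type} {Rules : Set (List (C × R) × (C × R))}

theorem exists_step_of_complete_children {c : C} {P : List (C × R)} {l' : Judg C R}
    {trs B : List (OTree (Judg C R))}
    (hrule' : ((trs ++ B).map OTree.root, l') ∈ RulesQ Rules) (hl' : l'.1 = c)
    (htrs : trs.map OTree.root = P.map liftJ)
    (hne : nodeT (c, none) trs ≠ nodeT l' (trs ++ B)) :
    ∃ t'', Step Rules (nodeT (c, none) trs) t'' ∧ TreeLE t'' (nodeT l' (trs ++ B)) := by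
  obtain ⟨c, u'⟩ := l'
  subst hl'
  obtain _ | ⟨b, B⟩ := B
  · obtain _ | res := u'
    · simp at hne
    · refine ⟨_, Step.close (mem_rules_of_mem_rulesQ (by simpa [htrs] using hrule')) htrs, ?_⟩
      simpa using TreeLE.refl _
  · obtain ⟨j, j₂, res, hmem, hb⟩ := exists_rule_of_mem_rulesQ (by simpa [htrs] using hrule')
    refine ⟨_, Step.openNext hmem htrs,
      treeLE_nodeT_iff.2 ⟨rfl, trs ++ [b], B, by simp, ?_⟩⟩
    exact List.rel_append (forall₂_treeLE_refl trs) (.cons (leafT_treeLE hb) .nil)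

theorem exists_eq_append_of_treeLE_nodeT {c : C} {l' : Judg C R} {P : List (C × R)}
    {trs ts' : List (OTree (Judg C R))} {s : OTree (Judg C R)}
    (htrs : trs.map OTree.root = P.map liftJ)
    (h : TreeLE (nodeT (c, none) (trs ++ [s])) (nodeT l' ts')) :
    ∃ s' B, ts' = trs ++ [s'] ++ B ∧ TreeLE s s' := by
  obtain ⟨-, A, B, rfl, hA⟩ := treeLE_nodeT_iff.1 h
  obtain ⟨A, S', rfl, hprefix, hlast⟩ := List.forall₂_append_left_iff.1 hA
  obtain ⟨s', hss', rfl⟩ : ∃ s', TreeLE s s' ∧ S' = [s'] := by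
    simpa [List.forall₂_cons_left_iff] using hlast
  obtain rfl := eq_of_forall₂_treeLE htrs hprefix
  exact ⟨s', B, rfl, hss'⟩

theorem exists_step_treeLE_of_ne {t t' : OTree (Judg C R)} (hpt : IsPET Rules t)
    (hpt' : IsPET Rules t') (hfin : TreeFinite t') (hle : TreeLE t t') (hne : t ≠ t') :
    ∃ t'', Step Rules t t'' ∧ TreeLE t'' t' := by
  induction hn : t'.dom.ncard using Nat.strong_induction_on generalizing t t' with
  | _ n ih =>
  obtain ⟨⟨c, u⟩, ts, rfl⟩ := hpt.exists_eq_nodeT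
  obtain ⟨l', ts', rfl⟩ := hpt'.exists_eq_nodeT
  obtain ⟨hrule, hsub⟩ := isTreeIn_nodeT_iff.1 hpt
  obtain ⟨hrule', hsub'⟩ := isTreeIn_nodeT_iff.1 hpt'
  obtain rfl : u = none :=
    Option.not_isSome_iff_eq_none.1 fun hu => hne (hle.eq_of_root_complete hu)
  have hl' : l'.1 = c := hle.root_fst_eq
  obtain ⟨hnil, -⟩ | ⟨-, -, -, -, ⟨⟩⟩ | ⟨j₁, j, j₂, res, v, hmem, hroots, -⟩ :=
    mem_rulesQ_iff.1 hrule
  · obtain rfl := List.map_eq_nil_iff.1 hnil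
    exact exists_step_of_complete_children (P := []) (trs := []) hrule' hl' rfl hne
  obtain ⟨trs, _, rfl, htrs, hlast⟩ := List.map_eq_append_iff.1 hroots
  obtain ⟨s, rfl, hs⟩ := List.map_eq_singleton_iff.1 hlast
  obtain ⟨s', B, rfl, hss'⟩ := exists_eq_append_of_treeLE_nodeT htrs hle
  obtain _ | r := v
  · by_cases hss : s = s'
    · -- In a rule of `RulesQ` an incomplete premise is the last one and forces an incomplete
      -- conclusion, so `t = t'`.
      subst hss
      obtain ⟨c', u'⟩ := l'
      obtain ⟨hB, rfl⟩ := eq_nil_of_mem_rulesQ (by simpa using hrule') (by simp [hs])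
      obtain rfl := List.map_eq_nil_iff.1 hB
      exact absurd (by simp_all) hne
    obtain ⟨s'', hstep, hle''⟩ := ih _ (hn ▸ ncard_dom_lt_of_mem hfin (by simp))
      (hsub s (by simp)) (hsub' s' (by simp)) (hfin.of_mem (by simp)) hss' hss rfl
    refine ⟨_, Step.descend hmem htrs hs hstep,
      treeLE_nodeT_iff.2 ⟨hl', trs ++ [s'], B, rfl, ?_⟩⟩
    exact List.rel_append (forall₂_treeLE_refl trs) (.cons hle'' .nil)
  · obtain rfl := hss'.eq_of_root_complete (by simp [hs])
    exact exists_step_of_complete_children (P := j₁ ++ [(j.1, r)]) hrule' hl'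
      (by simp [htrs, hs, liftJ]) hne

theorem reflTransGen_step_of_treeLE {t t' : OTree (Judg C R)} (hpt : IsPET Rules t)
    (hpt' : IsPET Rules t') (hfin : TreeFinite t') (hle : TreeLE t t') :
    Relation.ReflTransGen (Step Rules) t t' := by
  induction t using (measure fun t => weight t' - weight t).wf.induction with
  | h t ih =>
  by_cases hne : t = t'
  · exact hne ▸ .refl
  obtain ⟨t'', hstep, hle''⟩ := exists_step_treeLE_of_ne hpt hpt' hfin hle hne
  have := hstep.treeLT.weight_lt (hfin.subset hle''.1)
  have := hle''.weight_le hfin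
  have hlt : weight t' - weight t'' < weight t' - weight t := by omega
  exact .head hstep (ih t'' hlt (hpt.step hstep) hle'')

end Reachability

theorem step_vs_refinement_general {C R : Type} (Rules : Set (List (C × R) × (C × R)))
    (t t' : OTree (Judg C R))
    (hpt : IsPET Rules t) (hpt' : IsPET Rules t')
    (hft' : TreeFinite t') :
    (Step Rules t t' → TreeLT t t') ∧
    (TreeLE t t' → Relation.ReflTransGen (Step Rules) t t') :=
  ⟨Step.treeLT, reflTransGen_step_of_treeLE hpt hpt' hft'⟩

/-- on finite partial evaluation trees, one transition step
    implies strict refinement, and refinement implies reachability in finitely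
    many steps. -/
theorem step_vs_refinement {C R : Type} (Rules : Set (List (C × R) × (C × R)))
    (t t' : OTree (Judg C R))
    (hpt : IsPET Rules t) (hpt' : IsPET Rules t')
    (hft : TreeFinite t) (hft' : TreeFinite t') :
    (Step Rules t t' → TreeLT t t') ∧
    (TreeLE t t' → Relation.ReflTransGen (Step Rules) t t') :=
  step_vs_refinement_general Rules t t' hpt hpt' hft'
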